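/- arXiv:1003.0548 — 3 statements merged into one kernel-verified Lean document; each statement's English description precedes it below -/
import Mathlib

section
/- Let D ⊆ ℝ² be open and connected, l : D → ℝ⁴ a smooth isothermal parametrization of a minimal surface in S³ (⟨l,l⟩ = 1, ⟨l_u,l_u⟩ = ⟨l_v,l_v⟩ = E > 0, ⟨l_u,l_v⟩ = 0, Δl + 2E·l = 0), n : D → ℝ⁴ a smooth unit normal (⟨n,n⟩ = 1, ⟨n,l⟩ = ⟨n,l_u⟩ = ⟨n,l_v⟩ = 0), and a = ⟨l_{uu}, n⟩, b = ⟨l_{uv}, n⟩. Then on D the identity a² + b² = (1/2)ΔE − (E_u² + E_v²)/(2E) + E² holds. -/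
/-!
At each point the vectors `l, l_u/√E, l_v/√E, n` form an orthonormal basis of `ℝ⁴`.
Differentiating `⟪l, l⟫ = 1`, `⟪l_u, l_u⟫ = ⟪l_v, l_v⟫ = E` and `⟪l_u, l_v⟫ = 0` gives every
component of `l_uu` and `l_uv` in this basis except the normal ones `a` and `b`, so Parseval
expresses `|l_uu|²` and `|l_uv|²` through `E, E_u, E_v, a, b`. On the other hand
`½ ΔE = ⟪Δ l_u, l_u⟫ + |l_uu|² + |l_uv|²`, and differentiating the minimal surface equation
`Δl = -2E l` in `u` gives `⟪Δ l_u, l_u⟫ = -2E²`.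
-/

open Real
open scoped InnerProductSpace

noncomputable section

/-- ℝ⁴ with the standard Euclidean inner product. -/
abbrev E4 := EuclideanSpace ℝ (Fin 4)

/-- Partial derivative with respect to the first parameter. -/
def pu {F : Type*} [NormedAddCommGroup F] [NormedSpace ℝ F]
    (f : ℝ × ℝ → F) (p : ℝ × ℝ) : F := fderiv ℝ f p (1, 0)

/-- Partial derivative with respect to the second parameter. -/
def pv {F : Type*} [NormedAddCommGroup F] [NormedSpace ℝ F]
    (f : ℝ × ℝ → F) (p : ℝ × ℝ) : F := fderiv ℝ f p (0, 1)

open Set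
open scoped ContDiff

variable {V : Type*} [NormedAddCommGroup V] [InnerProductSpace ℝ V]

section Calculus

variable {X F : Type*} [NormedAddCommGroup X] [NormedSpace ℝ X]
  [NormedAddCommGroup F] [NormedSpace ℝ F] {D : Set X} {x : X}

theorem fderiv_eq_of_eqOn {f g : X → F} (hD : IsOpen D) (h : EqOn f g D) (hx : x ∈ D) :
    fderiv ℝ f x = fderiv ℝ g x :=
  (h.eventuallyEq_of_mem (hD.mem_nhds hx)).fderiv_eq

theorem ContDiffOn.differentiableAt_of_isOpen {f : X → F} (hf : ContDiffOn ℝ ∞ f D)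
    (hD : IsOpen D) (hx : x ∈ D) : DifferentiableAt ℝ f x :=
  (hf.contDiffAt (hD.mem_nhds hx)).differentiableAt (by simp)

theorem ContDiffOn.fderiv_apply_of_isOpen {f : X → F} (hf : ContDiffOn ℝ ∞ f D) (hD : IsOpen D)
    (v : X) : ContDiffOn ℝ ∞ (fun y => fderiv ℝ f y v) D :=
  (hf.fderiv_of_isOpen hD (m := ∞) (by simp)).clm_apply contDiffOn_const

theorem fderiv_fderiv_apply_comm {f : X → F} (hf : ContDiffAt ℝ 2 f x) (v w : X) :
    fderiv ℝ (fun y => fderiv ℝ f y v) x w = fderiv ℝ (fun y => fderiv ℝ f y w) x v := by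
  have hf' : DifferentiableAt ℝ (fderiv ℝ f) x :=
    (hf.fderiv_right (m := 1) le_rfl).differentiableAt one_ne_zero
  rw [fderiv_clm_apply hf' (differentiableAt_const _),
    fderiv_clm_apply hf' (differentiableAt_const _)]
  simpa using (hf.isSymmSndFDerivAt (by simp)).eq w v

theorem fderiv_apply_of_eqOn_inner {f g : X → V} {c : X → ℝ} (hD : IsOpen D)
    (hf : DifferentiableOn ℝ f D) (hg : DifferentiableOn ℝ g D)
    (hc : ∀ y ∈ D, ⟪f y, g y⟫_ℝ = c y) (hx : x ∈ D) (v : X) :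
    fderiv ℝ c x v = ⟪f x, fderiv ℝ g x v⟫_ℝ + ⟪fderiv ℝ f x v, g x⟫_ℝ := by
  rw [fderiv_eq_of_eqOn hD (fun y hy => (hc y hy).symm) hx]
  exact fderiv_inner_apply ℝ (hf.differentiableAt (hD.mem_nhds hx))
    (hg.differentiableAt (hD.mem_nhds hx)) v

end Calculus

theorem Orthonormal.sum_sq_inner_left {ι : Type*} [Fintype ι] [FiniteDimensional ℝ V]
    {v : ι → V} (hv : Orthonormal ℝ v)
    (hcard : Fintype.card ι = Module.finrank ℝ V) (w : V) :
    ∑ i, ⟪w, v i⟫_ℝ ^ 2 = ‖w‖ ^ 2 := by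
  simpa using (OrthonormalBasis.mk hv
    (hv.linearIndependent.span_eq_top_of_card_eq_finrank' hcard).ge).sum_sq_inner_left w

section Partials

variable {F : Type*} [NormedAddCommGroup F] [NormedSpace ℝ F] {D : Set (ℝ × ℝ)} {p : ℝ × ℝ}

theorem pu_congr {f g : ℝ × ℝ → F} (hD : IsOpen D) (h : EqOn f g D) (hp : p ∈ D) :
    pu f p = pu g p := by
  rw [pu, pu, fderiv_eq_of_eqOn hD h hp]

theorem pv_congr {f g : ℝ × ℝ → F} (hD : IsOpen D) (h : EqOn f g D) (hp : p ∈ D) :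
    pv f p = pv g p := by
  rw [pv, pv, fderiv_eq_of_eqOn hD h hp]

theorem pu_const (y : F) : pu (fun _ => y) p = 0 := by
  simp [pu]

theorem pv_const (y : F) : pv (fun _ => y) p = 0 := by
  simp [pv]

theorem ContDiffOn.pu_of_isOpen {f : ℝ × ℝ → F} (hf : ContDiffOn ℝ ∞ f D) (hD : IsOpen D) :
    ContDiffOn ℝ ∞ (pu f) D :=
  hf.fderiv_apply_of_isOpen hD _

theorem ContDiffOn.pv_of_isOpen {f : ℝ × ℝ → F} (hf : ContDiffOn ℝ ∞ f D) (hD : IsOpen D) :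
    ContDiffOn ℝ ∞ (pv f) D :=
  hf.fderiv_apply_of_isOpen hD _

theorem pu_pv_comm {f : ℝ × ℝ → F} (hf : ContDiffOn ℝ ∞ f D) (hD : IsOpen D) (hp : p ∈ D) :
    pu (pv f) p = pv (pu f) p :=
  fderiv_fderiv_apply_comm
    ((hf.contDiffAt (hD.mem_nhds hp)).of_le (WithTop.coe_le_coe.2 le_top)) _ _

theorem pu_of_eqOn_inner {f g : ℝ × ℝ → V} {c : ℝ × ℝ → ℝ} (hD : IsOpen D)
    (hf : ContDiffOn ℝ ∞ f D) (hg : ContDiffOn ℝ ∞ g D)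
    (hc : ∀ q ∈ D, ⟪f q, g q⟫_ℝ = c q) (hp : p ∈ D) :
    pu c p = ⟪f p, pu g p⟫_ℝ + ⟪pu f p, g p⟫_ℝ :=
  fderiv_apply_of_eqOn_inner hD (hf.differentiableOn (by simp)) (hg.differentiableOn (by simp))
    hc hp _

theorem pv_of_eqOn_inner {f g : ℝ × ℝ → V} {c : ℝ × ℝ → ℝ} (hD : IsOpen D)
    (hf : ContDiffOn ℝ ∞ f D) (hg : ContDiffOn ℝ ∞ g D)
    (hc : ∀ q ∈ D, ⟪f q, g q⟫_ℝ = c q) (hp : p ∈ D) :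
    pv c p = ⟪f p, pv g p⟫_ℝ + ⟪pv f p, g p⟫_ℝ :=
  fderiv_apply_of_eqOn_inner hD (hf.differentiableOn (by simp)) (hg.differentiableOn (by simp))
    hc hp _

end Partials

structure IsIsothermalInSphere (D : Set (ℝ × ℝ)) (l : ℝ × ℝ → V) (E : ℝ × ℝ → ℝ) : Prop where
  isOpen : IsOpen D
  contDiffOn : ContDiffOn ℝ ∞ l D
  inner_self : ∀ p ∈ D, ⟪l p, l p⟫_ℝ = 1
  inner_lu_lu : ∀ p ∈ D, ⟪pu l p, pu l p⟫_ℝ = E p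
  inner_lv_lv : ∀ p ∈ D, ⟪pv l p, pv l p⟫_ℝ = E p
  inner_lu_lv : ∀ p ∈ D, ⟪pu l p, pv l p⟫_ℝ = 0
  pos : ∀ p ∈ D, 0 < E p

structure IsUnitNormal (D : Set (ℝ × ℝ)) (l n : ℝ × ℝ → V) : Prop where
  inner_self : ∀ p ∈ D, ⟪n p, n p⟫_ℝ = 1
  inner_l : ∀ p ∈ D, ⟪n p, l p⟫_ℝ = 0
  inner_lu : ∀ p ∈ D, ⟪n p, pu l p⟫_ℝ = 0
  inner_lv : ∀ p ∈ D, ⟪n p, pv l p⟫_ℝ = 0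

namespace IsIsothermalInSphere

variable {D : Set (ℝ × ℝ)} {l n : ℝ × ℝ → V} {E : ℝ × ℝ → ℝ} {p : ℝ × ℝ}

theorem contDiffOn_lu (h : IsIsothermalInSphere D l E) : ContDiffOn ℝ ∞ (pu l) D :=
  h.contDiffOn.pu_of_isOpen h.isOpen

theorem contDiffOn_lv (h : IsIsothermalInSphere D l E) : ContDiffOn ℝ ∞ (pv l) D :=
  h.contDiffOn.pv_of_isOpen h.isOpen

theorem inner_lu_l (h : IsIsothermalInSphere D l E) : ∀ p ∈ D, ⟪pu l p, l p⟫_ℝ = 0 := by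
  intro p hp
  have h₁ := pu_of_eqOn_inner h.isOpen h.contDiffOn h.contDiffOn h.inner_self hp
  rw [pu_const, real_inner_comm] at h₁
  linarith

theorem inner_lv_l (h : IsIsothermalInSphere D l E) : ∀ p ∈ D, ⟪pv l p, l p⟫_ℝ = 0 := by
  intro p hp
  have h₁ := pv_of_eqOn_inner h.isOpen h.contDiffOn h.contDiffOn h.inner_self hp
  rw [pv_const, real_inner_comm] at h₁
  linarith

theorem pu_lv (h : IsIsothermalInSphere D l E) : ∀ p ∈ D, pu (pv l) p = pv (pu l) p :=
  fun _ => pu_pv_comm h.contDiffOn h.isOpen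

theorem inner_luu_l (h : IsIsothermalInSphere D l E) :
    ∀ p ∈ D, ⟪pu (pu l) p, l p⟫_ℝ = -E p := by
  intro p hp
  have h₁ := pu_of_eqOn_inner h.isOpen h.contDiffOn_lu h.contDiffOn h.inner_lu_l hp
  rw [pu_const, h.inner_lu_lu p hp] at h₁
  linarith

theorem inner_luv_l (h : IsIsothermalInSphere D l E) : ∀ p ∈ D, ⟪pv (pu l) p, l p⟫_ℝ = 0 := by
  intro p hp
  have h₁ := pv_of_eqOn_inner h.isOpen h.contDiffOn_lu h.contDiffOn h.inner_lu_l hp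
  rw [pv_const, h.inner_lu_lv p hp] at h₁
  linarith

theorem inner_luu_lu (h : IsIsothermalInSphere D l E) :
    ∀ p ∈ D, ⟪pu (pu l) p, pu l p⟫_ℝ = pu E p / 2 := by
  intro p hp
  have h₁ := pu_of_eqOn_inner h.isOpen h.contDiffOn_lu h.contDiffOn_lu h.inner_lu_lu hp
  rw [real_inner_comm] at h₁
  linarith

theorem inner_luv_lu (h : IsIsothermalInSphere D l E) :
    ∀ p ∈ D, ⟪pv (pu l) p, pu l p⟫_ℝ = pv E p / 2 := by
  intro p hp
  have h₁ := pv_of_eqOn_inner h.isOpen h.contDiffOn_lu h.contDiffOn_lu h.inner_lu_lu hp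
  rw [real_inner_comm] at h₁
  linarith

theorem inner_luv_lv (h : IsIsothermalInSphere D l E) :
    ∀ p ∈ D, ⟪pv (pu l) p, pv l p⟫_ℝ = pu E p / 2 := by
  intro p hp
  have h₁ := pu_of_eqOn_inner h.isOpen h.contDiffOn_lv h.contDiffOn_lv h.inner_lv_lv hp
  rw [h.pu_lv p hp, real_inner_comm] at h₁
  linarith

theorem inner_luu_lv (h : IsIsothermalInSphere D l E) :
    ∀ p ∈ D, ⟪pu (pu l) p, pv l p⟫_ℝ = -pv E p / 2 := by
  intro p hp
  have h₁ := pu_of_eqOn_inner h.isOpen h.contDiffOn_lu h.contDiffOn_lv h.inner_lu_lv hp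
  rw [pu_const, h.pu_lv p hp, real_inner_comm, h.inner_luv_lu p hp] at h₁
  linarith

theorem pu_pu_E_eq (h : IsIsothermalInSphere D l E) (hp : p ∈ D) :
    pu (pu E) p = 2 * (⟪pu (pu (pu l)) p, pu l p⟫_ℝ + ‖pu (pu l) p‖ ^ 2) := by
  have h₁ : EqOn (pu E) ((2 : ℝ) • fun q => ⟪pu (pu l) q, pu l q⟫_ℝ) D := fun q hq => by
    simp only [Pi.smul_apply, smul_eq_mul, h.inner_luu_lu q hq]
    ring
  rw [pu_congr h.isOpen h₁ hp, pu, fderiv_const_smul_field, Pi.smul_apply,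
    FunLike.coe_smul, Pi.smul_apply, ← pu,
    pu_of_eqOn_inner h.isOpen (h.contDiffOn_lu.pu_of_isOpen h.isOpen) h.contDiffOn_lu
      (fun _ _ => rfl) hp, real_inner_self_eq_norm_sq, smul_eq_mul]
  ring

theorem pv_pv_E_eq (h : IsIsothermalInSphere D l E) (hp : p ∈ D) :
    pv (pv E) p = 2 * (⟪pv (pv (pu l)) p, pu l p⟫_ℝ + ‖pv (pu l) p‖ ^ 2) := by
  have h₁ : EqOn (pv E) ((2 : ℝ) • fun q => ⟪pv (pu l) q, pu l q⟫_ℝ) D := fun q hq => by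
    simp only [Pi.smul_apply, smul_eq_mul, h.inner_luv_lu q hq]
    ring
  rw [pv_congr h.isOpen h₁ hp, pv, fderiv_const_smul_field, Pi.smul_apply,
    FunLike.coe_smul, Pi.smul_apply, ← pv,
    pv_of_eqOn_inner h.isOpen (h.contDiffOn_lu.pv_of_isOpen h.isOpen) h.contDiffOn_lu
      (fun _ _ => rfl) hp, real_inner_self_eq_norm_sq, smul_eq_mul]
  ring

theorem inner_laplacian_lu_lu (h : IsIsothermalInSphere D l E) (hE : ContDiffOn ℝ ∞ E D)
    (hmin : ∀ p ∈ D, pu (pu l) p + pv (pv l) p + (2 * E p) • l p = 0) (hp : p ∈ D) :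
    ⟪pu (pu (pu l)) p + pv (pv (pu l)) p, pu l p⟫_ℝ = -2 * E p ^ 2 := by
  have dl := h.contDiffOn.differentiableAt_of_isOpen h.isOpen hp
  have dluu := (h.contDiffOn_lu.pu_of_isOpen h.isOpen).differentiableAt_of_isOpen h.isOpen hp
  have dlvv := (h.contDiffOn_lv.pv_of_isOpen h.isOpen).differentiableAt_of_isOpen h.isOpen hp
  have dE := (hE.differentiableAt_of_isOpen h.isOpen hp).const_mul 2
  have hthird : pu (pv (pv l)) p = pv (pv (pu l)) p := by
    rw [pu_pv_comm h.contDiffOn_lv h.isOpen hp]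
    exact pv_congr h.isOpen h.pu_lv hp
  have hzero := pu_congr h.isOpen (g := fun _ => 0) hmin hp
  rw [pu_const, pu, fderiv_fun_add (dluu.fun_add dlvv) (dE.fun_smul dl), fderiv_fun_add dluu dlvv,
    fderiv_fun_smul dE dl] at hzero
  simp only [add_apply, smul_apply, ContinuousLinearMap.smulRight_apply] at hzero
  change pu (pu (pu l)) p + pu (pv (pv l)) p
    + ((2 * E p) • pu l p + pu (fun y => 2 * E y) p • l p) = 0 at hzero
  have h₁ := congrArg (⟪·, pu l p⟫_ℝ) hzero
  simp only [hthird, inner_add_left, real_inner_smul_left, inner_zero_left, h.inner_lu_lu p hp,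
    real_inner_comm (pu l p) (l p), h.inner_lu_l p hp] at h₁
  rw [inner_add_left]
  linear_combination h₁

theorem orthonormal_frame (h : IsIsothermalInSphere D l E) (hn : IsUnitNormal D l n)
    (hp : p ∈ D) :
    Orthonormal ℝ ![l p, (√(E p))⁻¹ • pu l p, (√(E p))⁻¹ • pv l p, n p] := by
  have hs : (√(E p))⁻¹ * ((√(E p))⁻¹ * E p) = 1 := by
    have := Real.mul_self_sqrt (h.pos p hp).le
    have := (Real.sqrt_pos.2 (h.pos p hp)).ne'
    field_simp
    linarith
  have hlu := h.inner_lu_l p hp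
  have hlv := h.inner_lv_l p hp
  have huv := h.inner_lu_lv p hp
  have hnl := hn.inner_l p hp
  have hnu := hn.inner_lu p hp
  have hnv := hn.inner_lv p hp
  rw [orthonormal_iff_ite]
  intro i j
  fin_cases i <;> fin_cases j <;>
    simp only [Fin.zero_eta, Fin.mk_one, Fin.reduceFinMk, Matrix.cons_val, Fin.isValue,
      Fin.reduceEq, if_true, if_false, real_inner_smul_left, real_inner_smul_right,
      h.inner_self p hp, h.inner_lu_lu p hp, h.inner_lv_lv p hp, hn.inner_self p hp, hs,
      hlu, hlv, huv, hnl, hnu, hnv, inner_eq_zero_symm.1 hlu, inner_eq_zero_symm.1 hlv,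
      inner_eq_zero_symm.1 huv, inner_eq_zero_symm.1 hnl, inner_eq_zero_symm.1 hnu,
      inner_eq_zero_symm.1 hnv, mul_zero]

theorem norm_sq_eq_frame [FiniteDimensional ℝ V] (hV : Module.finrank ℝ V = 4)
    (h : IsIsothermalInSphere D l E) (hn : IsUnitNormal D l n) (hp : p ∈ D) (w : V) :
    ‖w‖ ^ 2
      = ⟪w, l p⟫_ℝ ^ 2 + (⟪w, pu l p⟫_ℝ ^ 2 + ⟪w, pv l p⟫_ℝ ^ 2) / E p + ⟪w, n p⟫_ℝ ^ 2 := by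
  rw [← (h.orthonormal_frame hn hp).sum_sq_inner_left (by simp [hV]) w, Fin.sum_univ_four]
  simp only [Fin.isValue, Matrix.cons_val, real_inner_smul_right, mul_pow, inv_pow,
    Real.sq_sqrt (h.pos p hp).le]
  ring

theorem norm_sq_luu [FiniteDimensional ℝ V] (hV : Module.finrank ℝ V = 4)
    (h : IsIsothermalInSphere D l E) (hn : IsUnitNormal D l n) (hp : p ∈ D) :
    ‖pu (pu l) p‖ ^ 2
      = E p ^ 2 + (pu E p ^ 2 + pv E p ^ 2) / (4 * E p) + ⟪pu (pu l) p, n p⟫_ℝ ^ 2 := by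
  rw [h.norm_sq_eq_frame hV hn hp, h.inner_luu_l p hp, h.inner_luu_lu p hp, h.inner_luu_lv p hp]
  ring

theorem norm_sq_luv [FiniteDimensional ℝ V] (hV : Module.finrank ℝ V = 4)
    (h : IsIsothermalInSphere D l E) (hn : IsUnitNormal D l n) (hp : p ∈ D) :
    ‖pv (pu l) p‖ ^ 2 = (pu E p ^ 2 + pv E p ^ 2) / (4 * E p) + ⟪pv (pu l) p, n p⟫_ℝ ^ 2 := by
  rw [h.norm_sq_eq_frame hV hn hp, h.inner_luv_l p hp, h.inner_luv_lu p hp, h.inner_luv_lv p hp]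
  ring

end IsIsothermalInSphere

theorem stmt_2_general (D : Set (ℝ × ℝ)) (hD : IsOpen D)
    (E : ℝ × ℝ → ℝ) (l n : ℝ × ℝ → E4)
    (hE : ContDiffOn ℝ (⊤ : ℕ∞) E D) (hEpos : ∀ p ∈ D, 0 < E p)
    (hl : ContDiffOn ℝ (⊤ : ℕ∞) l D)
    (hunit : ∀ p ∈ D, ⟪l p, l p⟫_ℝ = 1)
    (hEu : ∀ p ∈ D, ⟪pu l p, pu l p⟫_ℝ = E p)
    (hEv : ∀ p ∈ D, ⟪pv l p, pv l p⟫_ℝ = E p)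
    (hF : ∀ p ∈ D, ⟪pu l p, pv l p⟫_ℝ = 0)
    (hmin : ∀ p ∈ D, pu (pu l) p + pv (pv l) p + (2 * E p) • l p = 0)
    (hn1 : ∀ p ∈ D, ⟪n p, n p⟫_ℝ = 1)
    (hnl : ∀ p ∈ D, ⟪n p, l p⟫_ℝ = 0)
    (hnu : ∀ p ∈ D, ⟪n p, pu l p⟫_ℝ = 0)
    (hnv : ∀ p ∈ D, ⟪n p, pv l p⟫_ℝ = 0)
    (a b : ℝ × ℝ → ℝ)
    (ha : ∀ p, a p = ⟪pu (pu l) p, n p⟫_ℝ)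
    (hb : ∀ p, b p = ⟪pv (pu l) p, n p⟫_ℝ) :
    ∀ p ∈ D,
      (a p) ^ 2 + (b p) ^ 2 =
        (1 / 2) * (pu (pu E) p + pv (pv E) p)
          - ((pu E p) ^ 2 + (pv E p) ^ 2) / (2 * E p) + (E p) ^ 2 := by
  intro p hp
  have hsurf : IsIsothermalInSphere D l E := ⟨hD, hl, hunit, hEu, hEv, hF, hEpos⟩
  have hnormal : IsUnitNormal D l n := ⟨hn1, hnl, hnu, hnv⟩
  have hdim : Module.finrank ℝ E4 = 4 := by simp
  have hlap := hsurf.inner_laplacian_lu_lu hE hmin hp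
  rw [inner_add_left] at hlap
  rw [ha, hb, hsurf.pu_pu_E_eq hp, hsurf.pv_pv_E_eq hp, hsurf.norm_sq_luu hdim hnormal hp,
    hsurf.norm_sq_luv hdim hnormal hp]
  linear_combination -hlap

/-- for a minimal surface in `S³` in isothermal parameters with unit normal `n`
and `a = ⟨l_{uu}, n⟩`, `b = ⟨l_{uv}, n⟩`, the identity
`a² + b² = (1/2)ΔE − (E_u² + E_v²)/(2E) + E²` holds on `D`. -/
theorem stmt_2 (D : Set (ℝ × ℝ)) (hD : IsOpen D) (hDconn : IsConnected D)
    (E : ℝ × ℝ → ℝ) (l n : ℝ × ℝ → E4)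
    (hE : ContDiffOn ℝ (⊤ : ℕ∞) E D) (hEpos : ∀ p ∈ D, 0 < E p)
    (hl : ContDiffOn ℝ (⊤ : ℕ∞) l D) (hn : ContDiffOn ℝ (⊤ : ℕ∞) n D)
    (hunit : ∀ p ∈ D, ⟪l p, l p⟫_ℝ = 1)
    (hEu : ∀ p ∈ D, ⟪pu l p, pu l p⟫_ℝ = E p)
    (hEv : ∀ p ∈ D, ⟪pv l p, pv l p⟫_ℝ = E p)
    (hF : ∀ p ∈ D, ⟪pu l p, pv l p⟫_ℝ = 0)
    (hmin : ∀ p ∈ D, pu (pu l) p + pv (pv l) p + (2 * E p) • l p = 0)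
    (hn1 : ∀ p ∈ D, ⟪n p, n p⟫_ℝ = 1)
    (hnl : ∀ p ∈ D, ⟪n p, l p⟫_ℝ = 0)
    (hnu : ∀ p ∈ D, ⟪n p, pu l p⟫_ℝ = 0)
    (hnv : ∀ p ∈ D, ⟪n p, pv l p⟫_ℝ = 0)
    (a b : ℝ × ℝ → ℝ)
    (ha : ∀ p, a p = ⟪pu (pu l) p, n p⟫_ℝ)
    (hb : ∀ p, b p = ⟪pv (pu l) p, n p⟫_ℝ) :
    ∀ p ∈ D,
      (a p) ^ 2 + (b p) ^ 2 =
        (1 / 2) * (pu (pu E) p + pv (pv E) p)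
          - ((pu E p) ^ 2 + (pv E p) ^ 2) / (2 * E p) + (E p) ^ 2 :=
  stmt_2_general D hD E l n hE hEpos hl hunit hEu hEv hF hmin hn1 hnl hnu hnv a b ha hb
end
end

section
/- For every α > 0 the function z_α(u) = ln( G_α(g_α(u)) / α ), where G_α(τ) = α²·cos²τ + sin²τ and g_α is the inverse of h_α(x) = √α · ∫₀ˣ G_α(τ)^{−1/2} dτ, is periodic with period ω = h_α(π): z_α(u + h_α(π)) = z_α(u) for all u ∈ ℝ. Consequently every solution of z'' + 4·sinh z = 0 on ℝ is periodic. -/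
/-!
`G_α` has period `π`, so `h_α(x + π) = h_α(x) + h_α(π)`. Since `h_α` is a strictly
increasing bijection of `ℝ`, its inverse satisfies `g_α(u + h_α(π)) = g_α(u) + π`, and `z_α`
inherits the period of `G_α`.

For the second part write the equation as `z' = w, w' = -f(z)` with `f = 4 sinh`, increasing
and vanishing at `0`. The velocity `w` vanishes somewhere on every half-line `[c, ∞)`:
otherwise, say `w > 0` there, either `z` becomes positive, after which the restoring force
drives `w` to `-∞`, or `z` stays nonpositive, so `w` is nondecreasing and drives `z` to `+∞`.
By uniqueness for the first-order system, a solution is symmetric about every zero of `w`, and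
composing the reflections in two zeros `a < b` gives the translation by `2(b - a)`.
-/

open Real

noncomputable section

/-- `G_α(τ) = α²·cos²τ + sin²τ`. -/
def Gfun (α τ : ℝ) : ℝ := α ^ 2 * Real.cos τ ^ 2 + Real.sin τ ^ 2

/-- `h_α(x) = √α · ∫₀ˣ G_α(τ)^{−1/2} dτ`. -/
def hfun (α : ℝ) (x : ℝ) : ℝ := Real.sqrt α * ∫ τ in (0:ℝ)..x, 1 / Real.sqrt (Gfun α τ)

/-- `g_α`, the inverse function of `h_α`. -/
def gfun (α : ℝ) : ℝ → ℝ := Function.invFun (hfun α)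

/-- `z_α(u) = ln( G_α(g_α(u)) / α )`. -/
def zfun (α : ℝ) (u : ℝ) : ℝ := Real.log (Gfun α (gfun α u) / α)

open Set

theorem surjective_of_map_add_const {f : ℝ → ℝ} {p c : ℝ} (hf : Continuous f) (hc : 0 < c)
    (h : ∀ x, f (x + p) = f x + c) : Function.Surjective f := by
  intro y
  have hf_zsmul (m : ℤ) : f (m • p) = f 0 + m • c :=
    AddConstMapClass.map_zsmul_const (⟨f, h⟩ : AddConstMap ℝ ℝ p c) m
  obtain ⟨n, hn⟩ := exists_nat_ge (|y - f 0| / c)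
  have hy : |y - f 0| ≤ n * c := (div_le_iff₀ hc).1 hn
  have hmem : y ∈ uIcc (f ((-n : ℤ) • p)) (f ((n : ℤ) • p)) := by
    rw [hf_zsmul, hf_zsmul, zsmul_eq_mul, zsmul_eq_mul]
    push_cast
    have := abs_le.1 hy
    exact Icc_subset_uIcc ⟨by linarith, by linarith⟩
  obtain ⟨x, -, hx⟩ := intermediate_value_uIcc hf.continuousOn hmem
  exact ⟨x, hx⟩

section

variable {α : ℝ}

lemma Gfun_pos (hα : 0 < α) (τ : ℝ) : 0 < Gfun α τ := by
  rcases eq_or_ne (sin τ) 0 with hsin | hsin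
  · have hcos : cos τ ^ 2 = 1 := by nlinarith [sin_sq_add_cos_sq τ]
    simp only [Gfun, hsin, hcos]
    positivity
  · exact add_pos_of_nonneg_of_pos (by positivity) (by positivity)

lemma Gfun_add_pi (α τ : ℝ) : Gfun α (τ + π) = Gfun α τ := by
  simp only [Gfun, cos_add_pi, sin_add_pi, neg_sq]

lemma continuous_Gfun (α : ℝ) : Continuous (Gfun α) := by
  unfold Gfun
  fun_prop

lemma continuous_inv_sqrt_Gfun (hα : 0 < α) : Continuous fun τ => 1 / √(Gfun α τ) :=
  continuous_const.div (continuous_Gfun α).sqrt fun τ => (sqrt_pos.2 (Gfun_pos hα τ)).ne'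

lemma hasDerivAt_hfun (hα : 0 < α) (x : ℝ) :
    HasDerivAt (hfun α) (√α * (1 / √(Gfun α x))) x :=
  (intervalIntegral.integral_hasDerivAt_right
    ((continuous_inv_sqrt_Gfun hα).intervalIntegrable 0 x)
    ((continuous_inv_sqrt_Gfun hα).stronglyMeasurableAtFilter _ _)
    (continuous_inv_sqrt_Gfun hα).continuousAt).const_mul √α

lemma strictMono_hfun (hα : 0 < α) : StrictMono (hfun α) :=
  strictMono_of_hasDerivAt_pos (hasDerivAt_hfun hα) fun x =>
    mul_pos (sqrt_pos.2 hα) (one_div_pos.2 (sqrt_pos.2 (Gfun_pos hα x)))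

lemma hfun_add_pi (hα : 0 < α) (x : ℝ) : hfun α (x + π) = hfun α x + hfun α π := by
  have hper : Function.Periodic (fun τ => 1 / √(Gfun α τ)) π := fun τ => by
    simp only [Gfun_add_pi]
  simp only [hfun, ← mul_add]
  rw [hper.intervalIntegral_add_eq_add 0 x
    fun _ _ => (continuous_inv_sqrt_Gfun hα).intervalIntegrable _ _, zero_add]

lemma gfun_add_hfun_pi (hα : 0 < α) (u : ℝ) : gfun α (u + hfun α π) = gfun α u + π := by
  have hπ : 0 < hfun α π := by
    simpa [hfun] using strictMono_hfun hα pi_pos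
  have hcont : Continuous (hfun α) :=
    continuous_iff_continuousAt.2 fun x => (hasDerivAt_hfun hα x).continuousAt
  have hsurj := surjective_of_map_add_const hcont hπ (hfun_add_pi hα)
  have hinv (y : ℝ) : hfun α (gfun α y) = y := Function.rightInverse_invFun hsurj y
  apply (strictMono_hfun hα).injective
  rw [hinv, hfun_add_pi hα, hinv]

theorem zfun_add_hfun_pi (hα : 0 < α) (u : ℝ) : zfun α (u + hfun α π) = zfun α u := by
  rw [zfun, gfun_add_hfun_pi hα, Gfun_add_pi, zfun]

end

lemma mul_sub_le_image_sub_of_le_hasDerivAt_Ici {g g' : ℝ → ℝ} {c m : ℝ}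
    (hg : ∀ u, HasDerivAt g (g' u) u) (hm : ∀ u, c ≤ u → m ≤ g' u) {u : ℝ} (hu : c ≤ u) :
    m * (u - c) ≤ g u - g c :=
  (convex_Ici c).mul_sub_le_image_sub_of_le_deriv
    (fun x _ => (hg x).continuousAt.continuousWithinAt)
    (fun x _ => (hg x).differentiableAt.differentiableWithinAt)
    (fun x hx => by rw [interior_Ici] at hx; rw [(hg x).deriv]; exact hm x hx.le)
    c self_mem_Ici u hu hu

lemma exists_lt_of_pos_le_hasDerivAt_Ici {g g' : ℝ → ℝ} {c m : ℝ}
    (hg : ∀ u, HasDerivAt g (g' u) u) (hm₀ : 0 < m) (hm : ∀ u, c ≤ u → m ≤ g' u) (B : ℝ) :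
    ∃ u, c ≤ u ∧ B < g u := by
  set u := c + (|B - g c| + 1) / m
  have hcu : c ≤ u := le_add_of_nonneg_right (by positivity)
  have hslope : m * (u - c) = |B - g c| + 1 := by simp only [u]; field_simp; ring
  refine ⟨u, hcu, ?_⟩
  linarith [mul_sub_le_image_sub_of_le_hasDerivAt_Ici hg hm hcu, le_abs_self (B - g c)]

/-- The equation `z'' + f z = 0` on `ℝ`, as a first-order system with velocity `w`. -/
structure SolvesNewton (f z w : ℝ → ℝ) : Prop where
  hasDerivAt_pos : ∀ u, HasDerivAt z (w u) u
  hasDerivAt_vel : ∀ u, HasDerivAt w (-f (z u)) u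

namespace SolvesNewton

variable {f z w : ℝ → ℝ}

lemma continuous_pos (hs : SolvesNewton f z w) : Continuous z :=
  continuous_iff_continuousAt.2 fun u => (hs.hasDerivAt_pos u).continuousAt

lemma continuous_vel (hs : SolvesNewton f z w) : Continuous w :=
  continuous_iff_continuousAt.2 fun u => (hs.hasDerivAt_vel u).continuousAt

lemma neg (hs : SolvesNewton f z w) : SolvesNewton (fun x => -f (-x)) (-z) (-w) where
  hasDerivAt_pos u := (hs.hasDerivAt_pos u).neg
  hasDerivAt_vel u := by simpa using (hs.hasDerivAt_vel u).neg

lemma reflect (hs : SolvesNewton f z w) (a : ℝ) :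
    SolvesNewton f (fun u => z (2 * a - u)) (fun u => -w (2 * a - u)) where
  hasDerivAt_pos u := (hs.hasDerivAt_pos (2 * a - u)).comp_const_sub (2 * a) u
  hasDerivAt_vel u := by
    simpa using ((hs.hasDerivAt_vel (2 * a - u)).comp_const_sub (2 * a) u).fun_neg

theorem not_forall_vel_pos (hs : SolvesNewton f z w) (hf : StrictMono f) (hf₀ : f 0 = 0)
    (c : ℝ) : ¬ ∀ u, c ≤ u → 0 < w u := by
  intro hpos
  by_cases hz : ∃ d, c ≤ d ∧ 0 < z d
  · obtain ⟨d, hcd, hzd⟩ := hz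
    have hz_mono : ∀ u, d ≤ u → z d ≤ z u := fun u hu => by
      have := mul_sub_le_image_sub_of_le_hasDerivAt_Ici (m := 0) hs.hasDerivAt_pos
        (fun v hv => (hpos v (hcd.trans hv)).le) hu
      linarith
    obtain ⟨u, hdu, hu⟩ := exists_lt_of_pos_le_hasDerivAt_Ici (g := fun u => -w u)
      (fun u => (hs.hasDerivAt_vel u).neg) (hf₀ ▸ hf hzd)
      (fun u hu => by simpa using hf.monotone (hz_mono u hu)) 0
    linarith [hpos u (hcd.trans hdu)]
  · push Not at hz
    have hw_mono : ∀ u, c ≤ u → w c ≤ w u := fun u hu => by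
      have := mul_sub_le_image_sub_of_le_hasDerivAt_Ici (m := 0) hs.hasDerivAt_vel
        (fun v hv => by linarith [hf₀ ▸ hf.monotone (hz v hv)]) hu
      linarith
    obtain ⟨u, hcu, hu⟩ :=
      exists_lt_of_pos_le_hasDerivAt_Ici hs.hasDerivAt_pos (hpos c le_rfl) hw_mono 0
    linarith [hz u hcu]

theorem exists_vel_eq_zero_ge (hs : SolvesNewton f z w) (hf : StrictMono f) (hf₀ : f 0 = 0)
    (c : ℝ) : ∃ a, c ≤ a ∧ w a = 0 := by
  by_contra! hw
  have himage : IsPreconnected (w '' Ici c) :=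
    isPreconnected_Ici.image w hs.continuous_vel.continuousOn
  have hzero : (0 : ℝ) ∉ w '' Ici c := fun ⟨a, ha, ha₀⟩ => hw a ha ha₀
  rcases (hw c le_rfl).lt_or_gt with hneg | hpos
  · refine hs.neg.not_forall_vel_pos (fun x y hxy => neg_lt_neg (hf (neg_lt_neg hxy)))
      (by simp [hf₀]) c fun u hu => ?_
    by_contra! hle
    exact hzero (himage.Icc_subset ⟨c, self_mem_Ici, rfl⟩ ⟨u, hu, rfl⟩
      ⟨hneg.le, by simpa using hle⟩)
  · refine hs.not_forall_vel_pos hf hf₀ c fun u hu => ?_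
    by_contra! hle
    exact hzero (himage.Icc_subset ⟨u, hu, rfl⟩ ⟨c, self_mem_Ici, rfl⟩ ⟨hle, hpos.le⟩)

/-- Uniqueness is applied on a window around `a` containing `u` and `2 * a - u`, on which the
vector field is Lipschitz because `f` is Lipschitz on the compact image of the window under `z`. -/
theorem symm_of_vel_eq_zero (hs : SolvesNewton f z w) (hf : LocallyLipschitz f) {a : ℝ}
    (ha : w a = 0) (u : ℝ) : z (2 * a - u) = z u := by
  set r := |u - a| + 1
  set C := z '' Icc (a - r) (a + r)
  obtain ⟨K, hK⟩ := hf.locallyLipschitzOn.exists_lipschitzOnWith_of_compact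
    ((isCompact_Icc (a := a - r) (b := a + r)).image_of_continuousOn
      hs.continuous_pos.continuousOn)
  obtain ⟨L, hv⟩ : ∃ L, LipschitzOnWith L (fun q : ℝ × ℝ => (q.2, -f q.1)) (C ×ˢ univ) :=
    ⟨_, LipschitzWith.prod_snd.lipschitzOnWith.prodMk
      (LipschitzWith.id.neg.comp_lipschitzOnWith
        (hK.comp LipschitzWith.prod_fst.lipschitzOnWith fun (_ : ℝ × ℝ) hq => hq.1))⟩
  have hr : 0 < r := by positivity
  have hsol {z' w' : ℝ → ℝ} (hs' : SolvesNewton f z' w')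
      (hC : ∀ t ∈ Ioo (a - r) (a + r), z' t ∈ C) (t : ℝ) (ht : t ∈ Ioo (a - r) (a + r)) :
      HasDerivAt (fun t => (z' t, w' t)) (w' t, -f (z' t)) t ∧ (z' t, w' t) ∈ C ×ˢ univ :=
    ⟨(hs'.hasDerivAt_pos t).prodMk (hs'.hasDerivAt_vel t), hC t ht, trivial⟩
  have key := ODE_solution_unique_of_mem_Ioo (fun _ _ => hv)
    (show a ∈ Ioo (a - r) (a + r) from ⟨by linarith, by linarith⟩)
    (hsol hs fun t ht => mem_image_of_mem z (Ioo_subset_Icc_self ht))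
    (hsol (hs.reflect a) fun t ht =>
      ⟨2 * a - t, ⟨by linarith [ht.2], by linarith [ht.1]⟩, rfl⟩)
    (by simp [ha, two_mul])
    (show u ∈ Ioo (a - r) (a + r) from ⟨by linarith [neg_abs_le (u - a)],
      by linarith [le_abs_self (u - a)]⟩)
  exact (congrArg Prod.fst key).symm

theorem exists_periodic (hs : SolvesNewton f z w) (hf : StrictMono f) (hf₀ : f 0 = 0)
    (hfL : LocallyLipschitz f) : ∃ T, 0 < T ∧ Function.Periodic z T := by
  obtain ⟨a, -, ha⟩ := hs.exists_vel_eq_zero_ge hf hf₀ 0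
  obtain ⟨b, hab, hb⟩ := hs.exists_vel_eq_zero_ge hf hf₀ (a + 1)
  refine ⟨2 * (b - a), by linarith, fun u => ?_⟩
  calc z (u + 2 * (b - a)) = z (2 * b - (2 * a - u)) := by ring_nf
    _ = z u := by rw [hs.symm_of_vel_eq_zero hfL hb, hs.symm_of_vel_eq_zero hfL ha]

end SolvesNewton

lemma solvesNewton_deriv_of_contDiff {z : ℝ → ℝ} (hz : ContDiff ℝ 2 z)
    (hode : ∀ u, deriv (deriv z) u + 4 * sinh (z u) = 0) :
    SolvesNewton (fun x => 4 * sinh x) z (deriv z) where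
  hasDerivAt_pos u := (hz.differentiable two_ne_zero u).hasDerivAt
  hasDerivAt_vel u := by
    have hz' : Differentiable ℝ (deriv z) :=
      (hz.iterate_deriv' 1 1).differentiable one_ne_zero
    rw [show -(4 * sinh (z u)) = deriv (deriv z) u by linarith [hode u]]
    exact (hz' u).hasDerivAt

/-- each `z_α` (α > 0) is periodic with period `ω = h_α(π)`; consequently
every solution of `z'' + 4·sinh z = 0` on `ℝ` is periodic. -/
theorem stmt_14 :
    (∀ α : ℝ, 0 < α → ∀ u : ℝ, zfun α (u + hfun α Real.pi) = zfun α u) ∧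
    ∀ z : ℝ → ℝ, ContDiff ℝ 2 z →
      (∀ u : ℝ, deriv (deriv z) u + 4 * Real.sinh (z u) = 0) →
      ∃ T : ℝ, 0 < T ∧ ∀ u : ℝ, z (u + T) = z u :=
  have hf : ContDiff ℝ 1 fun x => 4 * sinh x := contDiff_const.mul contDiff_sinh
  ⟨fun _ hα u => zfun_add_hfun_pi hα u, fun _ hz hode =>
    (solvesNewton_deriv_of_contDiff hz hode).exists_periodic
      (sinh_strictMono.const_mul four_pos) (by simp) hf.locallyLipschitz⟩
end
end

section
/- (Theorem: explicit formula for generalized tori of second type.) Let s, t ∈ ℝ, β = √(t² + 2·cosh s), and let e₁, e₂, e₃, e₄ be the standard orthonormal basis of ℝ⁴. Let z : ℝ → ℝ solve z'' + 4·sinh z = 0, z(0) = s, z'(0) = 2t, and let p : ℝ → ℝ⁴ solve p''(u) + z'(u)·p'(u) + β²·p(u) = 0 with p(0) = (1/β²)·( e^{−s/2}(t² + e^{−s})·e₁ − t·e₂ − e^{−s/2}·e₄ ) and p'(0) = −t·e^{−s/2}·e₁ + e₂. Suppose l, n : ℝ² → ℝ⁴ are smooth maps satisfying l_{uu} − (z'(u)/2)·l_u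 + e^{z(u)}·l − n = 0, l_{uv} − (z'(u)/2)·l_v = 0, l_{vv} + (z'(u)/2)·l_u + e^{z(u)}·l + n = 0, n_u + e^{−z(u)}·l_u = 0, n_v − e^{−z(u)}·l_v = 0, with initial conditions l(0,0) = e₁, l_u(0,0) = e^{s/2}·e₂, l_v(0,0) = e^{s/2}·e₃, n(0,0) = e₄. Then l(u,v) = e^{z(u)/2}·p(u) + (e^{z(u)/2}/β²)·[ cos(βv)·( e^{s/2}·e₁ + t·e₂ + e^{−s/2}·e₄ ) + β·sin(βv)·e₃ ] for all (u,v) ∈ ℝ². -/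
open Real
open scoped InnerProductSpace

noncomputable section

/-- The standard orthonormal basis vectors of `ℝ⁴` (`ee 0 = e₁`, …, `ee 3 = e₄`). -/
def ee (i : Fin 4) : E4 := EuclideanSpace.single i (1 : ℝ)

/-!
The quadruple `(l, l_u, l_v, n)` solves two linear first-order systems: one in `u`, whose
coefficients depend on `u` through `z`, and one in `v`, whose coefficients do not depend on `v`.
Uniqueness for linear ODEs, first along the `u`-axis and then along every line `u = const`, shows
that the quadruple is determined by its value at the origin. The explicit candidate
`l = e^{z/2} (p + γ)`, with `γ` a circle of frequency `β` in `v`, solves the same two systems and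
has the same value at the origin. For the `v`-system this needs the first integral
`z'² + 8 cosh z = 4β²` of `z'' + 4 sinh z = 0`, which is where `β = √(t² + 2 cosh s)` comes from.
-/

open Set

section LinearODE

variable {E : Type*} [NormedAddCommGroup E] [NormedSpace ℝ E]

theorem ODE_solution_unique_of_continuous_linear {A : ℝ → E →L[ℝ] E} (hA : Continuous A)
    {f g : ℝ → E} {t₀ : ℝ} (hf : ∀ t, HasDerivAt f (A t (f t)) t)
    (hg : ∀ t, HasDerivAt g (A t (g t)) t) (heq : f t₀ = g t₀) : f = g := by
  ext t
  obtain ⟨a, b, ht, ht₀⟩ : ∃ a b, t ∈ Ioo a b ∧ t₀ ∈ Ioo a b :=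
    ⟨min t t₀ - 1, max t t₀ + 1, by grind⟩
  obtain ⟨C, hC⟩ := isCompact_Icc.exists_bound_of_continuousOn (hA.continuousOn (s := Icc a b))
  have hlip : ∀ τ ∈ Ioo a b, LipschitzOnWith C.toNNReal (A τ) univ := fun τ hτ =>
    ((A τ).lipschitz.weaken <| by
      rw [← NNReal.coe_le_coe, coe_nnnorm]
      exact (hC τ (Ioo_subset_Icc_self hτ)).trans (Real.le_coe_toNNReal C)).lipschitzOnWith
  exact ODE_solution_unique_of_mem_Ioo hlip ht₀ (fun τ _ => ⟨hf τ, mem_univ _⟩)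
    (fun τ _ => ⟨hg τ, mem_univ _⟩) heq ht

theorem eq_of_hasDerivAt_slices {P : ℝ → E →L[ℝ] E}
    {Q : ℝ → ℝ → E →L[ℝ] E} (hP : Continuous P) (hQ : ∀ u, Continuous (Q u))
    {X Y : ℝ × ℝ → E}
    (hXu : ∀ u, HasDerivAt (fun x => X (x, 0)) (P u (X (u, 0))) u)
    (hYu : ∀ u, HasDerivAt (fun x => Y (x, 0)) (P u (Y (u, 0))) u)
    (hXv : ∀ u v, HasDerivAt (fun y => X (u, y)) (Q u v (X (u, v))) v)
    (hYv : ∀ u v, HasDerivAt (fun y => Y (u, y)) (Q u v (Y (u, v))) v)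
    (h₀ : X (0, 0) = Y (0, 0)) : X = Y := by
  have haxis := ODE_solution_unique_of_continuous_linear hP hXu hYu h₀
  ext ⟨u, v⟩ : 1
  exact congrFun (ODE_solution_unique_of_continuous_linear (hQ u) (hXv u) (hYv u)
    (congrFun haxis u)) v

end LinearODE

namespace Matrix

variable {ι : Type*} [Fintype ι] [DecidableEq ι] {F : Type*} [NormedAddCommGroup F]
  [NormedSpace ℝ F]

def tupleCLM (M : Matrix ι ι ℝ) : (ι → F) →L[ℝ] (ι → F) :=
  ∑ i, ∑ j, M i j • (ContinuousLinearMap.single ℝ (fun _ : ι => F) i).comp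
    (ContinuousLinearMap.proj j)

@[simp]
theorem tupleCLM_apply (M : Matrix ι ι ℝ) (y : ι → F) (i : ι) :
    M.tupleCLM y i = ∑ j, M i j • y j := by
  simp [tupleCLM, Finset.sum_apply, Pi.single_apply]

theorem continuous_tupleCLM {M : ℝ → Matrix ι ι ℝ} (hM : Continuous M) :
    Continuous fun t => (M t).tupleCLM (F := F) := by
  unfold tupleCLM
  fun_prop

end Matrix

section Partials

variable {F : Type*} [NormedAddCommGroup F] [NormedSpace ℝ F] {f : ℝ × ℝ → F}

theorem hasDerivAt_pu {u v : ℝ} (hf : DifferentiableAt ℝ f (u, v)) :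
    HasDerivAt (fun x => f (x, v)) (pu f (u, v)) u :=
  hf.hasFDerivAt.comp_hasDerivAt u ((hasDerivAt_id u).prodMk (hasDerivAt_const u v))

theorem hasDerivAt_pv {u v : ℝ} (hf : DifferentiableAt ℝ f (u, v)) :
    HasDerivAt (fun y => f (u, y)) (pv f (u, v)) v :=
  hf.hasFDerivAt.comp_hasDerivAt v ((hasDerivAt_const v u).prodMk (hasDerivAt_id v))

theorem ContDiff.differentiable_pu (hf : ContDiff ℝ 2 f) : Differentiable ℝ (pu f) :=
  ((hf.fderiv_right (m := 1) le_rfl).differentiable one_ne_zero).clm_apply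
    (differentiable_const _)

theorem ContDiff.differentiable_pv (hf : ContDiff ℝ 2 f) : Differentiable ℝ (pv f) :=
  ((hf.fderiv_right (m := 1) le_rfl).differentiable one_ne_zero).clm_apply
    (differentiable_const _)

theorem ContDiff.pu_pv (hf : ContDiff ℝ 2 f) (q : ℝ × ℝ) : pu (pv f) q = pv (pu f) q := by
  have hdf : DifferentiableAt ℝ (fderiv ℝ f) q :=
    (hf.fderiv_right (m := 1) le_rfl).differentiable one_ne_zero q
  change fderiv ℝ (fun q' => fderiv ℝ f q' (0, 1)) q (1, 0)
    = fderiv ℝ (fun q' => fderiv ℝ f q' (1, 0)) q (0, 1)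
  simp only [fderiv_clm_apply hdf (differentiableAt_const _), fderiv_const_apply]
  simpa using (hf.contDiffAt.isSymmSndFDerivAt (by simp)) (1, 0) (0, 1)

end Partials

section Frame

variable {F : Type*} [NormedAddCommGroup F] [NormedSpace ℝ F]

theorem hasDerivAt_vec₄ {f₀ f₁ f₂ f₃ : ℝ → F} {a₀ a₁ a₂ a₃ : F} {x : ℝ}
    (h₀ : HasDerivAt f₀ a₀ x) (h₁ : HasDerivAt f₁ a₁ x) (h₂ : HasDerivAt f₂ a₂ x)
    (h₃ : HasDerivAt f₃ a₃ x) :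
    HasDerivAt (fun x => ![f₀ x, f₁ x, f₂ x, f₃ x]) ![a₀, a₁, a₂, a₃] x := by
  rw [hasDerivAt_pi]
  intro i
  fin_cases i
  exacts [h₀, h₁, h₂, h₃]

def frame (l n : ℝ × ℝ → F) (q : ℝ × ℝ) : Fin 4 → F := ![l q, pu l q, pv l q, n q]

-- The derivative system reads `∂_u frame = uMatrix z u • frame` and
-- `∂_v frame = vMatrix z u • frame`; the `l_v`-row of `uMatrix` uses `l_vu = l_uv`.
def uMatrix (z : ℝ → ℝ) (u : ℝ) : Matrix (Fin 4) (Fin 4) ℝ :=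
  !![0, 1, 0, 0;
    -exp (z u), deriv z u / 2, 0, 1;
    0, 0, deriv z u / 2, 0;
    0, -exp (-z u), 0, 0]

def vMatrix (z : ℝ → ℝ) (u : ℝ) : Matrix (Fin 4) (Fin 4) ℝ :=
  !![0, 0, 1, 0;
    0, 0, deriv z u / 2, 0;
    -exp (z u), -(deriv z u / 2), 0, -1;
    0, 0, exp (-z u), 0]

variable {z : ℝ → ℝ}

theorem uMatrix_tupleCLM (u : ℝ) (a₀ a₁ a₂ a₃ : F) :
    (uMatrix z u).tupleCLM ![a₀, a₁, a₂, a₃] =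
      ![a₁, -exp (z u) • a₀ + (deriv z u / 2) • a₁ + a₃, (deriv z u / 2) • a₂,
        -exp (-z u) • a₁] := by
  ext1 i
  fin_cases i <;> simp [uMatrix, Fin.sum_univ_four]

theorem vMatrix_tupleCLM (u : ℝ) (a₀ a₁ a₂ a₃ : F) :
    (vMatrix z u).tupleCLM ![a₀, a₁, a₂, a₃] =
      ![a₂, (deriv z u / 2) • a₂, -exp (z u) • a₀ - (deriv z u / 2) • a₁ - a₃,
        exp (-z u) • a₂] := by
  ext1 i
  fin_cases i <;> simp [vMatrix, Fin.sum_univ_four, sub_eq_add_neg]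

theorem continuous_uMatrix (hz : ContDiff ℝ 2 z) : Continuous (uMatrix z) := by
  have := hz.continuous
  have := hz.continuous_deriv one_le_two
  unfold uMatrix
  fun_prop

variable {l n : ℝ × ℝ → F}

theorem hasDerivAt_frame_u (hl : ContDiff ℝ 2 l) (hn : Differentiable ℝ n)
    (huu : ∀ q : ℝ × ℝ, pu (pu l) q - (deriv z q.1 / 2) • pu l q
      + exp (z q.1) • l q - n q = 0)
    (huv : ∀ q : ℝ × ℝ, pv (pu l) q - (deriv z q.1 / 2) • pv l q = 0)
    (hnu : ∀ q : ℝ × ℝ, pu n q + exp (-z q.1) • pu l q = 0) (u v : ℝ) :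
    HasDerivAt (fun x => frame l n (x, v)) ((uMatrix z u).tupleCLM (frame l n (u, v))) u := by
  simp only [frame, uMatrix_tupleCLM]
  refine hasDerivAt_vec₄ (hasDerivAt_pu (hl.differentiable two_ne_zero _))
    ((hasDerivAt_pu (hl.differentiable_pu _)).congr_deriv ?_)
    ((hasDerivAt_pu (hl.differentiable_pv _)).congr_deriv ?_)
    ((hasDerivAt_pu (hn _)).congr_deriv ?_)
  · linear_combination (norm := module) huu (u, v)
  · linear_combination (norm := module) hl.pu_pv (u, v) + huv (u, v)
  · linear_combination (norm := module) hnu (u, v)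

theorem hasDerivAt_frame_v (hl : ContDiff ℝ 2 l) (hn : Differentiable ℝ n)
    (huv : ∀ q : ℝ × ℝ, pv (pu l) q - (deriv z q.1 / 2) • pv l q = 0)
    (hvv : ∀ q : ℝ × ℝ, pv (pv l) q + (deriv z q.1 / 2) • pu l q
      + exp (z q.1) • l q + n q = 0)
    (hnv : ∀ q : ℝ × ℝ, pv n q - exp (-z q.1) • pv l q = 0) (u v : ℝ) :
    HasDerivAt (fun y => frame l n (u, y)) ((vMatrix z u).tupleCLM (frame l n (u, v))) v := by
  simp only [frame, vMatrix_tupleCLM]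
  refine hasDerivAt_vec₄ (hasDerivAt_pv (hl.differentiable two_ne_zero _))
    ((hasDerivAt_pv (hl.differentiable_pu _)).congr_deriv ?_)
    ((hasDerivAt_pv (hl.differentiable_pv _)).congr_deriv ?_)
    ((hasDerivAt_pv (hn _)).congr_deriv ?_)
  · linear_combination (norm := module) huv (u, v)
  · linear_combination (norm := module) hvv (u, v)
  · linear_combination (norm := module) hnv (u, v)

end Frame

theorem sq_deriv_add_eight_mul_cosh_eq {z : ℝ → ℝ} (hz : ContDiff ℝ 2 z)
    (hzode : ∀ u, deriv (deriv z) u + 4 * sinh (z u) = 0) (u : ℝ) :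
    deriv z u ^ 2 + 8 * cosh (z u) = deriv z 0 ^ 2 + 8 * cosh (z 0) := by
  have hderiv : ∀ x, HasDerivAt (fun y => deriv z y ^ 2 + 8 * cosh (z y)) 0 x := fun x => by
    have h := ((hz.differentiable_deriv_two x).hasDerivAt.pow 2).add
      ((hz.differentiable two_ne_zero x).hasDerivAt.cosh.const_mul 8)
    refine h.congr_deriv ?_
    linear_combination 2 * deriv z x * hzode x
  exact is_const_of_deriv_eq_zero (fun x => (hderiv x).differentiableAt)
    (fun x => (hderiv x).deriv) u 0

theorem exp_eq_exp_half_sq (x : ℝ) : exp x = exp (x / 2) ^ 2 := by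
  rw [sq, ← exp_add, add_halves]

theorem exp_half_mul_exp_neg_half (x : ℝ) : exp (x / 2) * exp (-x / 2) = 1 := by
  rw [← exp_add, neg_div, add_neg_cancel, exp_zero]

section Trig
variable {F : Type*} [NormedAddCommGroup F] [NormedSpace ℝ F]

def trigCurve (β : ℝ) (x y : F) (v : ℝ) : F := cos (β * v) • x + sin (β * v) • y

theorem hasDerivAt_trigCurve (β : ℝ) (x y : F) (v : ℝ) :
    HasDerivAt (trigCurve β x y) (β • trigCurve β y (-x) v) v := by
  have hlin : HasDerivAt (fun v => β * v) β v := by simpa using (hasDerivAt_id v).const_mul β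
  refine (((hasDerivAt_cos _).comp v hlin).smul_const x).add
    (((hasDerivAt_sin _).comp v hlin).smul_const y) |>.congr_deriv ?_
  simp only [trigCurve]
  module

end Trig

section Candidate

variable {F : Type*} [NormedAddCommGroup F] [NormedSpace ℝ F]

-- The frame of `l = e^{z/2} (p + γ)`, with `n` read off from the `l_uu`-equation.
def explicitFrame (z : ℝ → ℝ) (p γ γ' : ℝ → F) (β : ℝ) (q : ℝ × ℝ) : Fin 4 → F :=
  ![exp (z q.1 / 2) • (p q.1 + γ q.2),
    exp (z q.1 / 2) • ((deriv z q.1 / 2) • (p q.1 + γ q.2) + deriv p q.1),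
    exp (z q.1 / 2) • γ' q.2,
    exp (-z q.1 / 2) • (p q.1 + γ q.2)
      - exp (z q.1 / 2) • ((deriv z q.1 / 2) • deriv p q.1 + β ^ 2 • p q.1)]

variable {z : ℝ → ℝ} {p γ γ' : ℝ → F} {β : ℝ}

theorem hasDerivAt_explicitFrame_u (hz : ContDiff ℝ 2 z)
    (hzode : ∀ u, deriv (deriv z) u + 4 * sinh (z u) = 0)
    (henergy : ∀ u, deriv z u ^ 2 + 8 * cosh (z u) = 4 * β ^ 2) (hp : ContDiff ℝ 2 p)
    (hpode : ∀ u, deriv (deriv p) u + deriv z u • deriv p u + β ^ 2 • p u = 0) (u v : ℝ) :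
    HasDerivAt (fun x => explicitFrame z p γ γ' β (x, v))
      ((uMatrix z u).tupleCLM (explicitFrame z p γ γ' β (u, v))) u := by
  have hz' : HasDerivAt z (deriv z u) u := (hz.differentiable two_ne_zero u).hasDerivAt
  have hA : HasDerivAt (fun x => exp (z x / 2)) (exp (z u / 2) * (deriv z u / 2)) u :=
    (hz'.div_const 2).exp
  have hB : HasDerivAt (fun x => exp (-z x / 2)) (exp (-z u / 2) * (-deriv z u / 2)) u :=
    (hz'.neg.div_const 2).exp
  have hc : HasDerivAt (fun x => deriv z x / 2) (deriv (deriv z) u / 2) u :=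
    (hz.differentiable_deriv_two u).hasDerivAt.div_const 2
  have hp' : HasDerivAt p (deriv p u) u := (hp.differentiable two_ne_zero u).hasDerivAt
  have hp'' : HasDerivAt (deriv p) (deriv (deriv p) u) u :=
    (hp.differentiable_deriv_two u).hasDerivAt
  -- In terms of `a = e^{z/2}` and `b = e^{-z/2}`, with `a * b = 1`, every coefficient
  -- identity below is polynomial.
  have hab := exp_half_mul_exp_neg_half (z u)
  have hE := exp_eq_exp_half_sq (z u)
  have hE' := exp_eq_exp_half_sq (-z u)
  have hz2 : deriv (deriv z) u = -2 * (exp (z u / 2) ^ 2 - exp (-z u / 2) ^ 2) := by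
    linear_combination hzode u - 4 * sinh_eq (z u) - 2 * hE + 2 * hE'
  have hc2 : deriv z u ^ 2 = 4 * β ^ 2 - 4 * (exp (z u / 2) ^ 2 + exp (-z u / 2) ^ 2) := by
    linear_combination henergy u - 8 * cosh_eq (z u) - 4 * hE - 4 * hE'
  have hp2 : deriv (deriv p) u = -(deriv z u • deriv p u) - β ^ 2 • p u := by
    linear_combination (norm := module) hpode u
  simp only [explicitFrame, uMatrix_tupleCLM]
  refine hasDerivAt_vec₄ ((hA.smul (hp'.add_const (γ v))).congr_deriv ?_)
    ((hA.smul ((hc.smul (hp'.add_const (γ v))).add hp'')).congr_deriv ?_)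
    ((hA.smul_const (γ' v)).congr_deriv ?_)
    (((hB.smul (hp'.add_const (γ v))).sub
      (hA.smul ((hc.smul hp'').add (hp'.const_smul (β ^ 2))))).congr_deriv ?_)
  · module
  · simp only [Pi.add_apply, Pi.smul_apply']
    rw [hz2, hp2, hE]
    match_scalars
    · ring
    · linear_combination exp (-z u / 2) * hab
    · linear_combination exp (-z u / 2) * hab
  · module
  · simp only [Pi.add_apply, Pi.smul_apply, Pi.smul_apply']
    rw [hz2, hp2, hE']
    match_scalars
    · linear_combination exp (z u / 2) / 4 * hc2 - exp (-z u / 2) * hab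
    · linear_combination exp (-z u / 2) * deriv z u / 2 * hab
    · linear_combination exp (-z u / 2) * deriv z u / 2 * hab

theorem hasDerivAt_explicitFrame_v (henergy : ∀ u, deriv z u ^ 2 + 8 * cosh (z u) = 4 * β ^ 2)
    (hγ : ∀ v, HasDerivAt γ (γ' v) v) (hγ' : ∀ v, HasDerivAt γ' (-β ^ 2 • γ v) v) (u v : ℝ) :
    HasDerivAt (fun y => explicitFrame z p γ γ' β (u, y))
      ((vMatrix z u).tupleCLM (explicitFrame z p γ γ' β (u, v))) v := by
  have hab := exp_half_mul_exp_neg_half (z u)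
  have hE := exp_eq_exp_half_sq (z u)
  have hE' := exp_eq_exp_half_sq (-z u)
  have hc2 : deriv z u ^ 2 = 4 * β ^ 2 - 4 * (exp (z u / 2) ^ 2 + exp (-z u / 2) ^ 2) := by
    linear_combination henergy u - 8 * cosh_eq (z u) - 4 * hE - 4 * hE'
  simp only [explicitFrame, vMatrix_tupleCLM]
  refine hasDerivAt_vec₄ (((hγ v).const_add (p u)).const_smul (exp (z u / 2)))
    ((((hγ v).const_add (p u)).const_smul (deriv z u / 2)).add_const (deriv p u)
      |>.const_smul (exp (z u / 2)) |>.congr_deriv ?_)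
    (((hγ' v).const_smul (exp (z u / 2))).congr_deriv ?_)
    ((((hγ v).const_add (p u)).const_smul (exp (-z u / 2))).sub_const
      (exp (z u / 2) • ((deriv z u / 2) • deriv p u + β ^ 2 • p u)) |>.congr_deriv ?_)
  · module
  · rw [hE]
    match_scalars
    · linear_combination exp (z u / 2) / 4 * hc2 - exp (-z u / 2) * hab
    · linear_combination exp (z u / 2) / 4 * hc2 - exp (-z u / 2) * hab
    · ring
  · rw [hE']
    match_scalars
    linear_combination -exp (-z u / 2) * hab

theorem explicitFrame_zero {s t β : ℝ} {e₁ e₂ e₃ e₄ : F} (hβ2 : β ^ 2 = t ^ 2 + 2 * cosh s)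
    (hz0 : z 0 = s) (hz0' : deriv z 0 = 2 * t)
    (hp0 : p 0 = (1 / β ^ 2) •
      ((exp (-s / 2) * (t ^ 2 + exp (-s))) • e₁ - t • e₂ - exp (-s / 2) • e₄))
    (hp0' : deriv p 0 = -(t * exp (-s / 2)) • e₁ + e₂)
    (hγ0 : γ 0 = (β ^ 2)⁻¹ • (exp (s / 2) • e₁ + t • e₂ + exp (-s / 2) • e₄))
    (hγ'0 : γ' 0 = e₃) :
    explicitFrame z p γ γ' β (0, 0) = ![e₁, exp (s / 2) • e₂, exp (s / 2) • e₃, e₄] := by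
  have hb : exp (-s / 2) = (exp (s / 2))⁻¹ := by rw [neg_div, exp_neg]
  have hβ2' : β ^ 2 = t ^ 2 + exp (s / 2) ^ 2 + (exp (s / 2))⁻¹ ^ 2 := by
    rw [hβ2, cosh_eq, exp_eq_exp_half_sq s, exp_eq_exp_half_sq (-s), hb]
    ring
  have ha : exp (s / 2) ≠ 0 := (exp_pos _).ne'
  have hβ2'0 : t ^ 2 + exp (s / 2) ^ 2 + (exp (s / 2))⁻¹ ^ 2 ≠ 0 := by positivity
  simp only [explicitFrame, hz0, hz0', hp0, hp0', hγ0, hγ'0, exp_eq_exp_half_sq (-s), hb, hβ2',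
    Matrix.vecCons_inj, true_and, and_true]
  refine ⟨?_, ?_, ?_⟩ <;> match_scalars <;> field_simp <;> ring

end Candidate

/-- explicit formula for generalized tori of second type: with
`β = √(t² + 2 cosh s)`, `z` the solution of `z'' + 4 sinh z = 0`, `z(0) = s`, `z'(0) = 2t`,
and `p` the solution of `p'' + z'·p' + β²·p = 0` with the stated initial data, any smooth
solution `(l,n)` of the derivative system of a generalized torus of second type with the
stated initial conditions satisfies
`l(u,v) = e^{z(u)/2}·p(u) + (e^{z(u)/2}/β²)·[cos βv·(e^{s/2}e₁ + t e₂ + e^{−s/2}e₄) + β sin βv·e₃]`. -/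
theorem stmt_17 (s t β : ℝ) (hβ : β = Real.sqrt (t ^ 2 + 2 * Real.cosh s))
    (z : ℝ → ℝ) (hz : ContDiff ℝ 2 z)
    (hzode : ∀ u : ℝ, deriv (deriv z) u + 4 * Real.sinh (z u) = 0)
    (hz0 : z 0 = s) (hz0' : deriv z 0 = 2 * t)
    (p : ℝ → E4) (hp : ContDiff ℝ 2 p)
    (hpode : ∀ u : ℝ, deriv (deriv p) u + deriv z u • deriv p u + β ^ 2 • p u = 0)
    (hp0 : p 0 = (1 / β ^ 2) •
      ((Real.exp (-s / 2) * (t ^ 2 + Real.exp (-s))) • ee 0 - t • ee 1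
        - Real.exp (-s / 2) • ee 3))
    (hp0' : deriv p 0 = -(t * Real.exp (-s / 2)) • ee 0 + ee 1)
    (l n : ℝ × ℝ → E4)
    (hl : ContDiff ℝ (⊤ : ℕ∞) l) (hn : ContDiff ℝ (⊤ : ℕ∞) n)
    (huu : ∀ q : ℝ × ℝ, pu (pu l) q - (deriv z q.1 / 2) • pu l q
      + Real.exp (z q.1) • l q - n q = 0)
    (huv : ∀ q : ℝ × ℝ, pv (pu l) q - (deriv z q.1 / 2) • pv l q = 0)
    (hvv : ∀ q : ℝ × ℝ, pv (pv l) q + (deriv z q.1 / 2) • pu l q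
      + Real.exp (z q.1) • l q + n q = 0)
    (hnu : ∀ q : ℝ × ℝ, pu n q + Real.exp (-z q.1) • pu l q = 0)
    (hnv : ∀ q : ℝ × ℝ, pv n q - Real.exp (-z q.1) • pv l q = 0)
    (hl0 : l (0, 0) = ee 0)
    (hlu0 : pu l (0, 0) = Real.exp (s / 2) • ee 1)
    (hlv0 : pv l (0, 0) = Real.exp (s / 2) • ee 2)
    (hn0 : n (0, 0) = ee 3) :
    ∀ q : ℝ × ℝ,
      l q = Real.exp (z q.1 / 2) • p q.1 + (Real.exp (z q.1 / 2) / β ^ 2) •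
        (Real.cos (β * q.2) •
            (Real.exp (s / 2) • ee 0 + t • ee 1 + Real.exp (-s / 2) • ee 3)
          + (β * Real.sin (β * q.2)) • ee 2) := by
  have hβ2 : β ^ 2 = t ^ 2 + 2 * cosh s := by rw [hβ, sq_sqrt (by positivity)]
  have hβ0 : β ≠ 0 := by rw [hβ]; positivity
  have henergy : ∀ u, deriv z u ^ 2 + 8 * cosh (z u) = 4 * β ^ 2 := fun u => by
    rw [sq_deriv_add_eight_mul_cosh_eq hz hzode u, hz0, hz0', hβ2]; ring
  set w := exp (s / 2) • ee 0 + t • ee 1 + exp (-s / 2) • ee 3 with hw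
  set γ := trigCurve β ((β ^ 2)⁻¹ • w) (β⁻¹ • ee 2)
  set γ' := fun v => β • trigCurve β (β⁻¹ • ee 2) (-((β ^ 2)⁻¹ • w)) v
  have hγ' : ∀ v, HasDerivAt γ' (-β ^ 2 • γ v) v := fun v =>
    ((hasDerivAt_trigCurve _ _ _ v).const_smul β).congr_deriv (by simp only [γ, trigCurve]; module)
  have hl2 : ContDiff ℝ 2 l := hl.of_le (by norm_cast)
  have hn1 : Differentiable ℝ n := hn.differentiable (by simp)
  have hframe : frame l n = explicitFrame z p γ γ' β :=
    eq_of_hasDerivAt_slices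
      (Matrix.continuous_tupleCLM (continuous_uMatrix hz)) (fun _ => continuous_const)
      (fun u => hasDerivAt_frame_u hl2 hn1 huu huv hnu u 0)
      (fun u => hasDerivAt_explicitFrame_u hz hzode henergy hp hpode u 0)
      (hasDerivAt_frame_v hl2 hn1 huv hvv hnv)
      (hasDerivAt_explicitFrame_v henergy (hasDerivAt_trigCurve _ _ _) hγ')
      (by
        rw [explicitFrame_zero (e₃ := ee 2) hβ2 hz0 hz0' hp0 hp0' (by simp [γ, trigCurve, hw])
          (by simp [γ', trigCurve, hβ0])]
        simp [frame, hl0, hlu0, hlv0, hn0])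
  intro q
  have hlq : l q = exp (z q.1 / 2) • (p q.1 + γ q.2) := congrFun (congrFun hframe q) 0
  rw [hlq]
  simp only [γ, trigCurve]
  match_scalars <;> field_simp
end
end
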